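/- arXiv:2201.12808 — 4 statements merged into one kernel-verified Lean document; each statement's English description precedes it below -/
import Mathlib

section
/- Let n ≥ 1 and let B ∈ Mₙ(ℂ) be a matrix such that B² is diagonalizable. Then there exist g ∈ GLₙ(ℂ), natural numbers r, k with 2r + k ≤ n, and scalars c₁, …, c_k ∈ ℂ such that g B g⁻¹ = Σ_{i=1}^{r} E_{2i−1,2i} + Σ_{j=1}^{k} c_j E_{2r+j,2r+j}. (This is the classification, up to conjugation by GL(n), of odd elements u = T_B of the queer Lie superalgebra q(n) such that [u,u] is semisimple, since T_B² equals the block-diagonal matrix diag(B², B²) and conjugation by GL(n) acts on the odd part of q(n) as the adjoint representation.) -/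
open Matrix

/-- A square complex matrix is diagonalizable (semisimple) if it is similar to a
diagonal matrix. -/
def Matrix.IsDiagonalizable {ι : Type*} [Fintype ι] [DecidableEq ι]
    (M : Matrix ι ι ℂ) : Prop :=
  ∃ g : Matrix ι ι ℂ, IsUnit g ∧ ∃ d : ι → ℂ, g * M * g⁻¹ = Matrix.diagonal d

/-!
Let `f` be an endomorphism of a finite-dimensional space over an algebraically closed field of
characteristic `≠ 2` such that `f²` is diagonalizable. An eigenvector of `f²` for `μ² ≠ 0` is a
sum of eigenvectors of `f` for `±μ`, and one for `0` is mapped by `f` into `ker f ⊓ range f`.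
Hence if `u` is a basis of `ker f ⊓ range f` and `f xᵢ = uᵢ`, the `xᵢ` together with the
eigenvectors of `f` span the space. Extending `u` to a basis `u, z` of the span of the
eigenvectors, the family `x, u, z` is also independent: `f` maps the span of the eigenvectors
into the span of the eigenvectors with nonzero eigenvalue, which meets `ker f` trivially. In this
basis `f` consists of the blocks `!![0, 1; 0, 0]` on the pairs `(uᵢ, xᵢ)` and is diagonal on `z`.
-/

open Module Submodule Set

namespace Module.End

variable {K V : Type*} [Field K] [AddCommGroup V] [Module K V] (f : Module.End K V)

theorem eigenspace_mul_self_le_sup_eigenspace_neg [NeZero (2 : K)] {μ : K} (hμ : μ ≠ 0) :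
    (f * f).eigenspace (μ * μ) ≤ f.eigenspace μ ⊔ f.eigenspace (-μ) := by
  intro w hw
  have hff : f (f w) = (μ * μ) • w := mem_eigenspace_iff.mp hw
  refine mem_sup.mpr ⟨(2 * μ)⁻¹ • (f w + μ • w), ?_, (2 * μ)⁻¹ • (μ • w - f w), ?_, ?_⟩
  · rw [mem_eigenspace_iff, map_smul, map_add, map_smul, hff]
    match_scalars <;> field_simp
  · rw [mem_eigenspace_iff, map_smul, map_sub, map_smul, hff]
    match_scalars <;> field_simp
  · match_scalars <;> field_simp <;> norm_num

theorem map_iSup_eigenspace_le :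
    (⨆ μ, f.eigenspace μ).map f ≤ ⨆ (μ) (_ : μ ≠ 0), f.eigenspace μ := by
  rw [Submodule.map_iSup]
  refine iSup_le fun μ => ?_
  rintro _ ⟨w, hw, rfl⟩
  rw [SetLike.mem_coe, mem_eigenspace_iff] at hw
  rcases eq_or_ne μ 0 with rfl | hμ
  · simp [hw]
  · exact mem_iSup_of_mem μ <| mem_iSup_of_mem hμ <|
      mem_eigenspace_iff.mpr (by rw [hw, map_smul, hw])

theorem span_sup_iSup_eigenspace_eq_top [IsAlgClosed K] [NeZero (2 : K)]
    (hsq : ⨆ d, (f * f).eigenspace d = ⊤) {ι : Type*} (x : ι → V)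
    (hx : LinearMap.ker f ⊓ LinearMap.range f ≤ span K (range (f ∘ x))) :
    span K (range x) ⊔ ⨆ μ, f.eigenspace μ = ⊤ := by
  rw [eq_top_iff, ← hsq]
  refine iSup_le fun d => ?_
  rcases eq_or_ne d 0 with rfl | hd
  · intro w hw
    rw [eigenspace_zero, LinearMap.mem_ker, mul_apply] at hw
    obtain ⟨y, hy, hfy⟩ : f w ∈ map f (span K (range x)) := by
      rw [map_span, ← range_comp]
      exact hx ⟨hw, w, rfl⟩
    have hwy : w - y ∈ ⨆ μ, f.eigenspace μ :=
      mem_iSup_of_mem 0 (by simp [eigenspace_zero, hfy])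
    simpa using add_mem_sup hy hwy
  · obtain ⟨μ, rfl⟩ := IsAlgClosed.exists_eq_mul_self d
    have hμ : μ ≠ 0 := by rintro rfl; simp at hd
    exact (f.eigenspace_mul_self_le_sup_eigenspace_neg hμ).trans <|
      (sup_le (le_iSup _ μ) (le_iSup _ (-μ))).trans le_sup_right

theorem disjoint_span_iSup_eigenspace {ι : Type*} (x : ι → V)
    (hx : LinearIndependent K (f ∘ x)) (hfx : ∀ i, f (f (x i)) = 0) :
    Disjoint (span K (range x)) (⨆ μ, f.eigenspace μ) := by
  rw [disjoint_def]
  intro v hv hvE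
  obtain ⟨a, rfl⟩ : v ∈ LinearMap.range (Finsupp.linearCombination K x) := by
    rwa [Finsupp.range_linearCombination]
  have hker : f (Finsupp.linearCombination K x a) ∈ f.eigenspace 0 := by
    rw [eigenspace_zero, LinearMap.mem_ker, Finsupp.apply_linearCombination,
      Finsupp.linearCombination_apply, map_finsuppSum]
    simp [hfx]
  have hzero : f (Finsupp.linearCombination K x a) = 0 :=
    disjoint_def.mp (f.eigenspaces_iSupIndep 0) _ hker
      (f.map_iSup_eigenspace_le (mem_map_of_mem hvE))
  rw [Finsupp.apply_linearCombination] at hzero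
  simp [linearIndependent_iff.mp hx a hzero]

theorem exists_linearIndependent_sumElim_eigenvectors [FiniteDimensional K V] {ι : Type*}
    (u : ι → V) (hu : LinearIndependent K u) (hfu : ∀ i, ∃ μ : K, f (u i) = μ • u i) :
    ∃ (k : ℕ) (z : Fin k → V) (c : Fin k → K), LinearIndependent K (Sum.elim u z) ∧
      (∀ l, f (z l) = c l • z l) ∧ span K (range (Sum.elim u z)) = ⨆ μ, f.eigenspace μ := by
  set t : Set V := ⋃ μ, (f.eigenspace μ : Set V)
  have hut : range u ⊆ t := by
    rintro _ ⟨i, rfl⟩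
    obtain ⟨μ, hμ⟩ := hfu i
    exact mem_iUnion.mpr ⟨μ, mem_eigenspace_iff.mpr hμ⟩
  have hs := hu.linearIndepOn_id
  set b := hs.extend hut
  have : Finite b := (hs.linearIndepOn_extend hut).linearIndependent.finite
  let e := Finite.equivFin ↥(b \ range u)
  let z : Fin (Nat.card ↥(b \ range u)) → V := fun l => (e.symm l : V)
  have hzb : ∀ l, z l ∈ b \ range u := fun l => (e.symm l).2
  have hrange : range (Sum.elim u z) = b := by
    rw [Set.Sum.elim_range, show range z = b \ range u from
      (e.symm.surjective.range_comp Subtype.val).trans Subtype.range_coe]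
    exact union_sdiff_cancel (hs.subset_extend hut)
  have hinj : Function.Injective (Sum.elim u z) :=
    hu.injective.sumElim (Subtype.val_injective.comp e.symm.injective)
      fun i l h => (hzb l).2 ⟨i, h⟩
  choose c hc using fun l => mem_iUnion.mp (hs.extend_subset hut (hzb l).1)
  refine ⟨_, z, c, ?_, fun l => mem_eigenspace_iff.mp (hc l), ?_⟩
  · rw [← linearIndepOn_id_range_iff hinj, hrange]
    exact hs.linearIndepOn_extend hut
  · rw [hrange, hs.span_extend_eq_span, iSup_eq_span]

theorem exists_jordan_basis_of_iSup_eigenspace_mul_self_eq_top [IsAlgClosed K]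
    [NeZero (2 : K)] [FiniteDimensional K V] (hsq : ⨆ d, (f * f).eigenspace d = ⊤) :
    ∃ (r k : ℕ) (b : Basis (Fin r ⊕ (Fin r ⊕ Fin k)) K V) (c : Fin k → K),
      (∀ i, f (b (.inl i)) = b (.inr (.inl i))) ∧ (∀ i, f (b (.inr (.inl i))) = 0) ∧
        ∀ l, f (b (.inr (.inr l))) = c l • b (.inr (.inr l)) := by
  set I := LinearMap.ker f ⊓ LinearMap.range f
  let u : Fin (finrank K I) → V := fun i => (Module.finBasis K I i : V)
  have hu : LinearIndependent K u :=
    (Module.finBasis K I).linearIndependent.map' I.subtype I.ker_subtype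
  have hIu : I ≤ span K (range u) := by
    rw [range_comp', ← I.coe_subtype, ← map_span, (Module.finBasis K I).span_eq, map_subtype_top]
  have hfu : ∀ i, f (u i) = 0 := fun i => (Module.finBasis K I i).2.1
  choose x hx using fun i => (Module.finBasis K I i).2.2
  have hxu : f ∘ x = u := funext hx
  obtain ⟨k, z, c, huz, hz, hspan⟩ :=
    f.exists_linearIndependent_sumElim_eigenvectors u hu fun i => ⟨0, by simp [hfu]⟩
  have hdisj : Disjoint (span K (range x)) (span K (range (Sum.elim u z))) := by
    rw [hspan]
    exact f.disjoint_span_iSup_eigenspace x (hxu ▸ hu) fun i => by rw [hx, hfu]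
  have hind : LinearIndependent K (Sum.elim x (Sum.elim u z)) :=
    (LinearIndependent.of_comp f (hxu ▸ hu)).sum_type huz hdisj
  have htop : ⊤ ≤ span K (range (Sum.elim x (Sum.elim u z))) := by
    rw [Set.Sum.elim_range, span_union, hspan,
      f.span_sup_iSup_eigenspace_eq_top hsq x (hxu ▸ hIu)]
  refine ⟨_, k, Basis.mk hind htop, c, fun i => ?_, fun i => ?_, fun l => ?_⟩ <;>
    simp only [Basis.mk_apply, Sum.elim_inl, Sum.elim_inr, hx, hfu, hz, u]

end Module.End

theorem Matrix.IsDiagonalizable.iSup_eigenspace_toLin'_eq_top {ι : Type*} [Fintype ι]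
    [DecidableEq ι] {M : Matrix ι ι ℂ} (hM : M.IsDiagonalizable) :
    ⨆ μ, End.eigenspace (toLin' M) μ = ⊤ := by
  obtain ⟨g, hg, d, hgM⟩ := hM
  have hdet : IsUnit g.det := (isUnit_iff_isUnit_det g).mp hg
  have hMg : M * g⁻¹ = g⁻¹ * diagonal d := by
    rw [← hgM, ← Matrix.mul_assoc, ← Matrix.mul_assoc, nonsing_inv_mul _ hdet, Matrix.one_mul]
  have hcol (j : ι) : g⁻¹.col j ∈ End.eigenspace (toLin' M) (d j) := by
    rw [← mulVec_single_one, End.mem_eigenspace_iff, toLin'_apply, mulVec_mulVec, hMg,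
      ← mulVec_mulVec, diagonal_mulVec_single, ← smul_eq_mul, Pi.single_smul, mulVec_smul]
  have hsurj : Function.Surjective (toLin' g⁻¹) :=
    mulVec_surjective_iff_isUnit.mpr (isUnit_nonsing_inv_iff.mpr hg)
  rw [eq_top_iff, ← LinearMap.range_eq_top.mpr hsurj, range_toLin', span_le]
  rintro _ ⟨j, rfl⟩
  exact mem_iSup_of_mem (d j) (hcol j)

theorem Matrix.exists_isUnit_mul_mul_inv_eq_toMatrix {K ι : Type*} [Field K] [Fintype ι]
    [DecidableEq ι] (M : Matrix ι ι K) (b : Basis ι K (ι → K)) :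
    ∃ g : Matrix ι ι K, IsUnit g ∧ g * M * g⁻¹ = LinearMap.toMatrix b b (toLin' M) := by
  set e := Pi.basisFun K ι
  refine ⟨b.toMatrix e,
    ⟨⟨_, _, b.toMatrix_mul_toMatrix_flip e, e.toMatrix_mul_toMatrix_flip b⟩, rfl⟩, ?_⟩
  rw [inv_eq_right_inv (b.toMatrix_mul_toMatrix_flip e),
    ← basis_toMatrix_mul_linearMap_toMatrix_mul_basis_toMatrix (b' := e) (c' := e),
    LinearMap.toMatrix_eq_toMatrix', LinearMap.toMatrix'_toLin']

section OddNormalForm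

variable {n r k : ℕ}

theorem two_mul_lt_of_two_mul_add_le (hrk : 2 * r + k ≤ n) {i : ℕ} (hi : i < r) :
    2 * i < n := by
  omega

theorem two_mul_add_one_lt_of_two_mul_add_le (hrk : 2 * r + k ≤ n) {i : ℕ} (hi : i < r) :
    2 * i + 1 < n := by
  omega

theorem two_mul_add_lt_of_two_mul_add_le (hrk : 2 * r + k ≤ n) {l : ℕ} (hl : l < k) :
    2 * r + l < n := by
  omega

noncomputable def finJordanEquiv (h : 2 * r + k = n) : Fin r ⊕ (Fin r ⊕ Fin k) ≃ Fin n :=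
  Equiv.ofBijective
    (Sum.elim (fun i => ⟨2 * i + 1, two_mul_add_one_lt_of_two_mul_add_le h.le i.isLt⟩)
      (Sum.elim (fun i => ⟨2 * i, two_mul_lt_of_two_mul_add_le h.le i.isLt⟩) fun l =>
        ⟨2 * r + l, two_mul_add_lt_of_two_mul_add_le h.le l.isLt⟩))
    ((Fintype.bijective_iff_injective_and_card _).mpr
      ⟨by rintro (i | i | l) (j | j | m) hij <;> simp [Fin.ext_iff] at hij ⊢ <;> omega,
        by simp; omega⟩)

variable {K : Type*} [Field K] (hrk : 2 * r + k ≤ n) (c : Fin k → K)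

def oddNormalForm : Matrix (Fin n) (Fin n) K :=
  (∑ i : Fin r, Matrix.single ⟨2 * (i : ℕ), two_mul_lt_of_two_mul_add_le hrk i.isLt⟩
      ⟨2 * (i : ℕ) + 1, two_mul_add_one_lt_of_two_mul_add_le hrk i.isLt⟩ (1 : K)) +
  ∑ j : Fin k, c j • Matrix.single ⟨2 * r + (j : ℕ), two_mul_add_lt_of_two_mul_add_le hrk j.isLt⟩
      ⟨2 * r + (j : ℕ), two_mul_add_lt_of_two_mul_add_le hrk j.isLt⟩ (1 : K)

theorem oddNormalForm_apply (a b : Fin n) :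
    oddNormalForm hrk c a b =
      (∑ i : Fin r, if 2 * (i : ℕ) = a ∧ 2 * (i : ℕ) + 1 = b then 1 else 0) +
        ∑ l : Fin k, if 2 * r + (l : ℕ) = a ∧ 2 * r + (l : ℕ) = b then c l else 0 := by
  simp only [oddNormalForm, Matrix.add_apply, Matrix.sum_apply, Matrix.smul_apply,
    Matrix.single_apply, Fin.ext_iff, smul_eq_mul, mul_ite, mul_one, mul_zero]

theorem oddNormalForm_transpose_even (i : Fin r) :
    (oddNormalForm hrk c)ᵀ ⟨2 * i, two_mul_lt_of_two_mul_add_le hrk i.isLt⟩ = 0 := by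
  ext a
  have h₁ (j : Fin r) : ¬(2 * (j : ℕ) = a ∧ 2 * (j : ℕ) + 1 = 2 * i) := by omega
  have h₂ (l : Fin k) : ¬(2 * r + (l : ℕ) = a ∧ 2 * r + (l : ℕ) = 2 * i) := by omega
  simp [oddNormalForm_apply, h₁, h₂]

theorem oddNormalForm_transpose_odd (i : Fin r) :
    (oddNormalForm hrk c)ᵀ ⟨2 * i + 1, two_mul_add_one_lt_of_two_mul_add_le hrk i.isLt⟩ =
      Pi.single ⟨2 * i, two_mul_lt_of_two_mul_add_le hrk i.isLt⟩ 1 := by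
  ext a
  have h₁ (j : Fin r) : 2 * (j : ℕ) = a ∧ 2 * (j : ℕ) + 1 = 2 * i + 1 ↔
      i = j ∧ a = ⟨2 * i, two_mul_lt_of_two_mul_add_le hrk i.isLt⟩ := by
    simp only [Fin.ext_iff]; omega
  have h₂ (l : Fin k) : ¬(2 * r + (l : ℕ) = a ∧ 2 * r + (l : ℕ) = 2 * i + 1) := by omega
  simp only [transpose_apply, oddNormalForm_apply, h₁, h₂, ite_and, if_false,
    Finset.sum_const_zero, add_zero, Finset.sum_ite_eq, Finset.mem_univ, if_true,
    Pi.single_apply]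

theorem oddNormalForm_transpose_diag (l : Fin k) :
    (oddNormalForm hrk c)ᵀ ⟨2 * r + l, two_mul_add_lt_of_two_mul_add_le hrk l.isLt⟩ =
      Pi.single ⟨2 * r + l, two_mul_add_lt_of_two_mul_add_le hrk l.isLt⟩ (c l) := by
  ext a
  have h₁ (i : Fin r) : ¬(2 * (i : ℕ) = a ∧ 2 * (i : ℕ) + 1 = 2 * r + l) := by omega
  have h₂ (m : Fin k) : 2 * r + (m : ℕ) = a ∧ 2 * r + (m : ℕ) = 2 * r + l ↔
      l = m ∧ a = ⟨2 * r + l, two_mul_add_lt_of_two_mul_add_le hrk l.isLt⟩ := by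
    simp only [Fin.ext_iff]; omega
  simp only [transpose_apply, oddNormalForm_apply, h₁, h₂, ite_and, if_false,
    Finset.sum_const_zero, zero_add, Finset.sum_ite_eq, Finset.mem_univ, if_true,
    Pi.single_apply]

theorem LinearMap.toMatrix_reindex_finJordanEquiv {V : Type*} [AddCommGroup V] [Module K V]
    (f : Module.End K V) (h : 2 * r + k = n) (b : Basis (Fin r ⊕ (Fin r ⊕ Fin k)) K V)
    (hx : ∀ i, f (b (.inl i)) = b (.inr (.inl i))) (hu : ∀ i, f (b (.inr (.inl i))) = 0)
    (hz : ∀ l, f (b (.inr (.inr l))) = c l • b (.inr (.inr l))) :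
    LinearMap.toMatrix (b.reindex (finJordanEquiv h)) (b.reindex (finJordanEquiv h)) f =
      oddNormalForm h.le c := by
  set b' := b.reindex (finJordanEquiv h)
  have hb' (x) : b' (finJordanEquiv h x) = b x := by simp [b']
  have hrow (x) : (LinearMap.toMatrix b' b' f)ᵀ (finJordanEquiv h x) = b'.repr (f (b x)) := by
    ext a
    rw [transpose_apply, LinearMap.toMatrix_apply, hb']
  refine transpose_injective (funext fun j => ?_)
  obtain ⟨x | i | l, rfl⟩ := (finJordanEquiv h).surjective j
  · rw [hrow, hx, ← hb', b'.repr_self, Finsupp.single_eq_pi_single]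
    exact (oddNormalForm_transpose_odd h.le c x).symm
  · rw [hrow, hu, map_zero, Finsupp.coe_zero]
    exact (oddNormalForm_transpose_even h.le c i).symm
  · rw [hrow, hz, ← hb', map_smul, b'.repr_self, Finsupp.smul_single_one,
      Finsupp.single_eq_pi_single]
    exact (oddNormalForm_transpose_diag h.le c l).symm

end OddNormalForm

/-- Classification of odd elements of q(n) with semisimple square, up to the
adjoint (conjugation) action of GL(n). -/
theorem q_n_odd_classification (n : ℕ) (B : Matrix (Fin n) (Fin n) ℂ)
    (hB : (B * B).IsDiagonalizable) :
    ∃ g : Matrix (Fin n) (Fin n) ℂ, IsUnit g ∧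
      ∃ r k : ℕ, ∃ hrk : 2 * r + k ≤ n, ∃ c : Fin k → ℂ,
        g * B * g⁻¹ =
          (∑ i : Fin r, Matrix.single
              ⟨2 * (i : ℕ), by have := i.isLt; omega⟩
              ⟨2 * (i : ℕ) + 1, by have := i.isLt; omega⟩ (1 : ℂ)) +
          ∑ j : Fin k, c j • Matrix.single
              ⟨2 * r + (j : ℕ), by have := j.isLt; omega⟩
              ⟨2 * r + (j : ℕ), by have := j.isLt; omega⟩ (1 : ℂ) := by
  have hsq : ⨆ d, End.eigenspace (toLin' B * toLin' B) d = ⊤ := by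
    simpa only [toLin'_mul, End.mul_eq_comp] using hB.iSup_eigenspace_toLin'_eq_top
  obtain ⟨r, k, b, c, hx, hu, hz⟩ :=
    End.exists_jordan_basis_of_iSup_eigenspace_mul_self_eq_top _ hsq
  have hn : 2 * r + k = n := by
    simpa [two_mul, add_assoc] using (finrank_eq_card_basis b).symm
  obtain ⟨g, hg, hgB⟩ := B.exists_isUnit_mul_mul_inv_eq_toMatrix (b.reindex (finJordanEquiv hn))
  exact ⟨g, hg, r, k, hn.le, c,
    hgB.trans ((toLin' B).toMatrix_reindex_finJordanEquiv c hn b hx hu hz)⟩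
end

section
/- Let m, n ≥ 1, let B ∈ M_{m×n}(ℂ) and C ∈ M_{n×m}(ℂ) be matrices with BC = 0 and CB = 0 (equivalently, the odd element u = [[0,B],[C,0]] of gl(m|n) satisfies [u,u] = 0). Then there exist g ∈ GL_m(ℂ), h ∈ GLₙ(ℂ), and integers 0 ≤ r ≤ s ≤ min(m,n) such that g B h⁻¹ = Σ_{i=1}^{r} E_{ii} and h C g⁻¹ = Σ_{i=r+1}^{s} E_{ii}. (This is the classification, up to the adjoint action of GL(m)×GL(n) given by (g,h)·(B,C) = (gBh⁻¹, hCg⁻¹), of square-zero odd elements of gl(m|n).) -/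
/-!
Regard `B` and `C` as linear maps `f : ℂⁿ → ℂᵐ` and `g : ℂᵐ → ℂⁿ`; the hypotheses say
`im g ⊆ ker f` and `im f ⊆ ker g`. Choose `w₁, …, w_r` whose images `f wᵢ` form a basis of `im f`
and `v₁, …, v_s` whose images `g vⱼ` form a basis of `im g`. The family `w` is independent modulo
`ker f` and `r + dim ker f = n`, so `w` followed by any basis of `ker f` extending `g v` is a basis
of `ℂⁿ`; symmetrically `f w`, `v`, then vectors of `ker g` form a basis of `ℂᵐ`. In these bases `f`
sends the `i`-th basis vector to the `i`-th one for `i ≤ r` and kills the others, while `g` sends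
the vectors in positions `r + 1, …, r + s` to their namesakes and kills the others.
-/

open Module Matrix

theorem Finset.sum_attach_Ico_add {M : Type*} [AddCommMonoid M] (r s : ℕ)
    (F : {x // x ∈ Finset.Ico r (r + s)} → M) :
    ∑ x ∈ (Finset.Ico r (r + s)).attach, F x = ∑ j : Fin s, F ⟨r + j, by simp⟩ := by
  have hF : ∀ x : {x // x ∈ Finset.Ico r (r + s)}, r + (x - r) = (x : ℕ) := fun x =>
    Nat.add_sub_cancel' (Finset.mem_Ico.mp x.2).1
  refine Finset.sum_bij' (fun x _ => ⟨x - r, by have := Finset.mem_Ico.mp x.2; omega⟩)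
    (fun j _ => ⟨r + j, by simp⟩) (by simp) (by simp) (fun x _ => Subtype.ext (hF x))
    (fun j _ => by simp) (fun x _ => congrArg F (Subtype.ext (hF x)).symm)

theorem Matrix.reindex_sum_single {α β α' β' ι R : Type*} [DecidableEq α] [DecidableEq β]
    [DecidableEq α'] [DecidableEq β'] [AddCommMonoid R] (s : Finset ι) (e : α ≃ α') (e' : β ≃ β')
    (p : ι → α) (q : ι → β) (a : R) :
    reindex e e' (∑ i ∈ s, single (p i) (q i) a) = ∑ i ∈ s, single (e (p i)) (e' (q i)) a := by
  ext
  simp [Matrix.sum_apply, Matrix.single_apply, Equiv.eq_symm_apply]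

section CommRing

variable {R M N : Type*} [CommRing R] [AddCommGroup M] [Module R M] [AddCommGroup N] [Module R N]

theorem Module.Basis.isUnit_toMatrix {ι : Type*} [Fintype ι] [DecidableEq ι]
    (b b' : Basis ι R M) : IsUnit (b.toMatrix b') :=
  have := b.invertibleToMatrix b'
  isUnit_of_invertible _

theorem Module.Basis.toMatrix_basisFun_mul_mul_inv {m n : Type*} [Fintype m] [DecidableEq m]
    [Fintype n] [DecidableEq n] (A : Matrix m n R) (b : Basis m R (m → R))
    (c : Basis n R (n → R)) :
    b.toMatrix (Pi.basisFun R m) * A * (c.toMatrix (Pi.basisFun R n))⁻¹ =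
      LinearMap.toMatrix c b (toLin' A) := by
  rw [inv_eq_right_inv (c.toMatrix_mul_toMatrix_flip _),
    ← basis_toMatrix_mul_linearMap_toMatrix_mul_basis_toMatrix c (Pi.basisFun R n) b
      (Pi.basisFun R m), ← Matrix.toLin_eq_toLin', LinearMap.toMatrix_toLin]

theorem LinearMap.toMatrix_reindex {α β α' β' : Type*} [Fintype α] [DecidableEq α] [Fintype β]
    [Fintype α'] [DecidableEq α'] [Fintype β'] (f : M →ₗ[R] N) (b : Basis α R M)
    (c : Basis β R N) (e : α ≃ α') (e' : β ≃ β') :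
    LinearMap.toMatrix (b.reindex e) (c.reindex e') f = reindex e' e (LinearMap.toMatrix b c f) := by
  ext
  simp [LinearMap.toMatrix_apply]

theorem LinearMap.toMatrix_eq_sum_single {α β ι : Type*} [Fintype α] [DecidableEq α] [Fintype β]
    [DecidableEq β] [Fintype ι] (f : M →ₗ[R] N) (b : Basis α R M) (c : Basis β R N)
    {p : ι → β} {q : ι → α} (hq : q.Injective) (hf : ∀ i, f (b (q i)) = c (p i))
    (hf₀ : ∀ a, a ∉ Set.range q → f (b a) = 0) :
    LinearMap.toMatrix b c f = ∑ i, Matrix.single (p i) (q i) 1 := by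
  ext x a
  rw [LinearMap.toMatrix_apply, Matrix.sum_apply]
  by_cases ha : a ∈ Set.range q
  · obtain ⟨i, rfl⟩ := ha
    rw [hf, c.repr_self, Finset.sum_eq_single i
      (fun j _ hj => single_apply_of_col_ne _ _ (hq.ne hj) _) (by simp)]
    simp [Finsupp.single_apply, Matrix.single_apply]
  · rw [hf₀ a ha, map_zero, Finsupp.zero_apply,
      Finset.sum_eq_zero fun i _ => single_apply_of_col_ne _ _ (fun h => ha ⟨i, h⟩) _]

end CommRing

section Field

variable {K V W : Type*} [Field K] [AddCommGroup V] [Module K V] [AddCommGroup W] [Module K W]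

theorem Module.Basis.sumExtend_inl {ι : Type*} {v : ι → V} (hv : LinearIndependent K v) (i : ι) :
    Basis.sumExtend hv (.inl i) = v i := by
  rw [Basis.sumExtend, Basis.reindex_apply, Basis.coe_extend]
  rfl

theorem LinearMap.exists_linearIndependent_comp [FiniteDimensional K W] (f : W →ₗ[K] V) :
    ∃ w : Fin (finrank K (LinearMap.range f)) → W, LinearIndependent K (f ∘ w) := by
  let b := finBasis K (LinearMap.range f)
  choose w hw using fun i => LinearMap.mem_range.mp (b i).2
  refine ⟨w, ?_⟩
  rw [show f ∘ w = (LinearMap.range f).subtype ∘ b from funext hw]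
  exact b.linearIndependent.map' _ (Submodule.ker_subtype _)

theorem LinearMap.exists_basis_sum_ker [FiniteDimensional K W] (f : W →ₗ[K] V)
    {ι κ : Type*} [Fintype ι] [Fintype κ] {w : ι → W} (hw : LinearIndependent K (f ∘ w))
    (hι : Fintype.card ι = finrank K (LinearMap.range f)) {u : κ → W}
    (hu : LinearIndependent K u) (hfu : ∀ k, f (u k) = 0) :
    ∃ (t : ℕ) (b : Basis (ι ⊕ κ ⊕ Fin t) K W),
      (∀ i, b (.inl i) = w i) ∧ (∀ k, b (.inr (.inl k)) = u k) ∧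
        ∀ e, f (b (.inr (.inr e))) = 0 := by
  let u' : κ → LinearMap.ker f := fun k => ⟨u k, hfu k⟩
  have hu' : LinearIndependent K u' := .of_comp (LinearMap.ker f).subtype hu
  let bK := Basis.sumExtend hu'
  have : Fintype (Basis.sumExtendIndex hu') :=
    have := Module.Finite.finite_basis bK
    have := Finite.sum_right κ (β := Basis.sumExtendIndex hu')
    Fintype.ofFinite _
  have hind : LinearIndependent K (Sum.elim w (fun k => (bK k : W))) := by
    have hq : LinearIndependent K ((LinearMap.ker f).mkQ ∘ w) :=
      .of_comp ((LinearMap.ker f).liftQ f le_rfl) hw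
    simpa using
      (bK.linearIndependent.sumElim_of_quotient w hq).comp _ (Equiv.sumComm _ _).injective
  have hcard : Fintype.card (ι ⊕ κ ⊕ Basis.sumExtendIndex hu') = finrank K W := by
    rw [Fintype.card_sum, hι, ← finrank_eq_card_basis bK, f.finrank_range_add_finrank_ker]
  refine ⟨_, (basisOfLinearIndependentOfCardEqFinrank' _ hind hcard).reindex
    (.sumCongr (.refl _) (.sumCongr (.refl _) (Fintype.equivFin _))), ?_, ?_, ?_⟩
  · intro i; simp
  · intro k; simp [bK, u', Basis.sumExtend_inl]
  · intro e; simp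

theorem exists_bases_toMatrix_eq_sum_single [FiniteDimensional K V] [FiniteDimensional K W]
    (f : W →ₗ[K] V) (g : V →ₗ[K] W) (hfg : f ∘ₗ g = 0) (hgf : g ∘ₗ f = 0) :
    ∃ (r s t t' : ℕ) (bW : Basis (Fin r ⊕ Fin s ⊕ Fin t) K W)
      (bV : Basis (Fin r ⊕ Fin s ⊕ Fin t') K V),
      LinearMap.toMatrix bW bV f = ∑ i, single (.inl i) (.inl i) 1 ∧
      LinearMap.toMatrix bV bW g = ∑ j, single (.inr (.inl j)) (.inr (.inl j)) 1 := by
  obtain ⟨w, hw⟩ := f.exists_linearIndependent_comp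
  obtain ⟨v, hv⟩ := g.exists_linearIndependent_comp
  obtain ⟨t, bW, hbW_w, hbW_gv, hbW_ker⟩ :=
    f.exists_basis_sum_ker hw (by simp) hv fun j => LinearMap.congr_fun hfg (v j)
  obtain ⟨t', bV, hbV_v, hbV_fw, hbV_ker⟩ :=
    g.exists_basis_sum_ker hv (by simp) hw fun i => LinearMap.congr_fun hgf (w i)
  refine ⟨_, _, t, t', bW, bV.reindex ((Equiv.sumAssoc _ _ _).symm.trans
    ((Equiv.sumCongr (Equiv.sumComm _ _) (Equiv.refl _)).trans (Equiv.sumAssoc _ _ _))), ?_, ?_⟩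
  · refine LinearMap.toMatrix_eq_sum_single _ _ _ Sum.inl_injective (fun i => ?_) ?_
    · simp [hbW_w, hbV_fw]
    · rintro (i | j | e) h
      · exact absurd ⟨i, rfl⟩ h
      · simpa [hbW_gv] using LinearMap.congr_fun hfg (v j)
      · exact hbW_ker e
  · refine LinearMap.toMatrix_eq_sum_single _ _ _ (Sum.inr_injective.comp Sum.inl_injective)
      (fun j => ?_) ?_
    · simp [hbW_gv, hbV_v]
    · rintro (i | j | e) h
      · simpa [hbV_fw] using LinearMap.congr_fun hgf (w i)
      · exact absurd ⟨j, rfl⟩ h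
      · simpa using hbV_ker e

end Field

/-- Classification of square-zero odd elements of gl(m|n) up to the adjoint action of
GL(m) × GL(n). -/
theorem gl_mn_square_zero_classification (m n : ℕ)
    (B : Matrix (Fin m) (Fin n) ℂ) (C : Matrix (Fin n) (Fin m) ℂ)
    (hBC : B * C = 0) (hCB : C * B = 0) :
    ∃ g : Matrix (Fin m) (Fin m) ℂ, IsUnit g ∧
    ∃ h : Matrix (Fin n) (Fin n) ℂ, IsUnit h ∧
    ∃ r s : ℕ, ∃ hrs : r ≤ s, ∃ hs : s ≤ min m n,
      g * B * h⁻¹ =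
        (∑ i : Fin r, Matrix.single
            ⟨(i : ℕ), by have := i.isLt; omega⟩
            ⟨(i : ℕ), by have := i.isLt; omega⟩ (1 : ℂ)) ∧
      h * C * g⁻¹ =
        ∑ i ∈ (Finset.Ico r s).attach,
          Matrix.single
            (⟨(i : ℕ), by have := Finset.mem_Ico.mp i.2; omega⟩ : Fin n)
            (⟨(i : ℕ), by have := Finset.mem_Ico.mp i.2; omega⟩ : Fin m) (1 : ℂ) := by
  obtain ⟨r, s, t, t', bW, bV, hB, hC⟩ :=
    exists_bases_toMatrix_eq_sum_single (toLin' B) (toLin' C)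
      (by rw [← toLin'_mul, hBC, map_zero]) (by rw [← toLin'_mul, hCB, map_zero])
  have hn : r + (s + t) = n := by simpa using (finrank_eq_card_basis bW).symm
  have hm : r + (s + t') = m := by simpa using (finrank_eq_card_basis bV).symm
  let eW : Fin r ⊕ Fin s ⊕ Fin t ≃ Fin n :=
    ((Equiv.sumCongr (.refl _) finSumFinEquiv).trans finSumFinEquiv).trans (finCongr hn)
  let eV : Fin r ⊕ Fin s ⊕ Fin t' ≃ Fin m :=
    ((Equiv.sumCongr (.refl _) finSumFinEquiv).trans finSumFinEquiv).trans (finCongr hm)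
  refine ⟨(bV.reindex eV).toMatrix (Pi.basisFun ℂ _), Basis.isUnit_toMatrix _ _,
    (bW.reindex eW).toMatrix (Pi.basisFun ℂ _), Basis.isUnit_toMatrix _ _,
    r, r + s, by omega, by omega, ?_, ?_⟩
  -- `eV` and `eW` send `inl i` to `i` and `inr (inl j)` to `r + j` definitionally.
  · rw [Basis.toMatrix_basisFun_mul_mul_inv, LinearMap.toMatrix_reindex, hB, reindex_sum_single]
    rfl
  · rw [Basis.toMatrix_basisFun_mul_mul_inv, LinearMap.toMatrix_reindex, hC, reindex_sum_single,
      Finset.sum_attach_Ico_add]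
    rfl
end

section
/- Let m, n ≥ 1, let B ∈ M_{m×n}(ℂ) and C ∈ M_{n×m}(ℂ) be matrices such that both BC and CB are diagonalizable (equivalently, the square of the odd element u = [[0,B],[C,0]] of gl(m|n) is a semisimple even element). Then there exist g ∈ GL_m(ℂ) and h ∈ GLₙ(ℂ) such that the matrices g B h⁻¹ and h C g⁻¹ are both rectangular-diagonal, i.e., all of their entries in positions (i,j) with i ≠ j vanish. (This is the gl(m|n) case of the normal form, as a sum of root vectors for mutually orthogonal linearly independent isotropic roots, for odd elements of a finite-dimensional symmetrizable Kac–Moody Lie superalgebra whose bracket square is semisimple.) -/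
open Matrix

/-!
Put `b = toLin' B` and `c = toLin' C`, so that `b ∘ c` and `c ∘ b` are semisimple. If `b ≠ 0`,
the eigenvectors of `c ∘ b` span, so one of them, `w`, has `b w ≠ 0`. Then `K ∙ b w` is stable
under `b ∘ c` and so has a `b ∘ c`-stable complement `V₁`, and `W₁ = b⁻¹ V₁` is a complement of
`K ∙ w` with `b W₁ ⊆ V₁` and `c V₁ ⊆ W₁`. Starting the bases with `b w` and `w` and continuing
with bases of `V₁` and `W₁` obtained recursively makes both `b` and `c` rectangular-diagonal.
If `b = 0`, exchange the roles of `b` and `c`.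
-/

open Module Module.End Polynomial Set

universe u

namespace Matrix

section IsRectDiagonal

variable {α : Type*} [Zero α] {p q : ℕ}

def IsRectDiagonal (A : Matrix (Fin p) (Fin q) α) : Prop :=
  ∀ (i : Fin p) (j : Fin q), (i : ℕ) ≠ j → A i j = 0

theorem isRectDiagonal_zero : (0 : Matrix (Fin p) (Fin q) α).IsRectDiagonal :=
  fun _ _ _ ↦ rfl

theorem IsRectDiagonal.of_submatrix_succ {A : Matrix (Fin (p + 1)) (Fin (q + 1)) α}
    (hrow : ∀ j : Fin q, A 0 j.succ = 0) (hcol : ∀ i : Fin p, A i.succ 0 = 0)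
    (h : (A.submatrix Fin.succ Fin.succ).IsRectDiagonal) : A.IsRectDiagonal := by
  intro i j hij
  induction i using Fin.cases with
  | zero => induction j using Fin.cases with
    | zero => exact absurd rfl hij
    | succ j => exact hrow j
  | succ i => induction j using Fin.cases with
    | zero => exact hcol i
    | succ j => exact h i j (by simpa using hij)

end IsRectDiagonal

variable {K ι : Type*} [Field K] [Fintype ι] [DecidableEq ι]

theorem isSemisimple_toLin'_diagonal (d : ι → K) : IsSemisimple (toLin' (diagonal d)) := by
  classical
  have hsep : (∏ x ∈ Finset.univ.image d, (X - C x)).Separable :=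
    separable_prod_X_sub_C_iff'.mpr fun _ _ _ _ ↦ id
  refine isSemisimple_of_squarefree_aeval_eq_zero hsep.squarefree ?_
  change aeval (toLinAlgEquiv' (diagonal d)) _ = 0
  rw [aeval_algEquiv, AlgHom.comp_apply, ← diagonalAlgHom_apply K, aeval_algHom_apply,
    aeval_pi_apply]
  convert map_zero (toLinAlgEquiv' (R := K) (n := ι))
  ext i j
  simp [Finset.prod_eq_zero (Finset.mem_image_of_mem d (Finset.mem_univ i))]

theorem IsDiagonalizable.isSemisimple_toLin' {M : Matrix ι ι ℂ} (hM : M.IsDiagonalizable) :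
    IsSemisimple (toLin' M) := by
  obtain ⟨g, hg, d, hgd⟩ := hM
  let := hg.invertible
  refine ((toLinearEquiv' g ‹_›).isSemisimple_iff _ _ ?_).mpr (isSemisimple_toLin'_diagonal d)
  have hconj : g * M = diagonal d * g := by rw [← hgd, inv_mul_cancel_right_of_invertible]
  change toLin' g ∘ₗ toLin' M = toLin' (diagonal d) ∘ₗ toLin' g
  rw [← toLin'_mul, ← toLin'_mul, hconj]

end Matrix

section Complements

variable {K V W : Type*} [Field K] [AddCommGroup V] [Module K V] [AddCommGroup W] [Module K W]

theorem IsCompl.exists_smul_add {N : Submodule K V} {y : V} (h : IsCompl (K ∙ y) N) (z : V) :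
    ∃ a : K, ∃ x ∈ N, a • y + x = z := by
  simpa [Submodule.mem_sup, Submodule.mem_span_singleton] using
    (h.sup_eq_top ▸ Submodule.mem_top : z ∈ (K ∙ y) ⊔ N)

theorem isCompl_span_singleton_comap {f : W →ₗ[K] V} {w : W} {N : Submodule K V}
    (h : IsCompl (K ∙ f w) N) (hfw : f w ≠ 0) : IsCompl (K ∙ w) (N.comap f) := by
  have hfwN : f w ∉ N := (Submodule.disjoint_span_singleton' hfw).mp h.disjoint.symm
  have hw : w ≠ 0 := ne_of_apply_ne f (by simpa using hfw)
  refine ⟨((Submodule.disjoint_span_singleton' hw).mpr hfwN).symm,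
    codisjoint_iff.mpr (eq_top_iff.mpr fun z _ ↦ ?_)⟩
  obtain ⟨a, x, hx, hz⟩ := h.exists_smul_add (f z)
  refine Submodule.mem_sup.mpr
    ⟨a • w, Submodule.smul_mem _ a (Submodule.mem_span_singleton_self w), z - a • w, ?_,
      add_sub_cancel _ _⟩
  simpa [← hz] using hx

theorem exists_eigenvector_apply_ne_zero {g : End K W} (hg : ⨆ μ, g.eigenspace μ = ⊤)
    {f : W →ₗ[K] V} (hf : f ≠ 0) : ∃ (w : W) (μ : K), g w = μ • w ∧ f w ≠ 0 := by
  by_contra! h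
  refine hf (LinearMap.ker_eq_top.mp (top_le_iff.mp ?_))
  exact hg ▸ iSup_le fun μ x hx ↦ h x μ (mem_eigenspace_iff.mp hx)

theorem Module.End.IsSemisimple.exists_isCompl_span_singleton_mapsTo {g : End K V}
    (hg : g.IsSemisimple) {y : V} {μ : K} (hy : g y = μ • y) :
    ∃ N : Submodule K V, IsCompl (K ∙ y) N ∧ MapsTo g N N := by
  have hinv : K ∙ y ∈ g.invtSubmodule := by
    rw [mem_invtSubmodule, Submodule.span_singleton_le_iff_mem, Submodule.mem_comap, hy]
    exact Submodule.smul_mem _ μ (Submodule.mem_span_singleton_self y)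
  obtain ⟨N, hN, hcompl⟩ := isSemisimple_iff.mp hg _ hinv
  exact ⟨N, hcompl, (mem_invtSubmodule g).mp hN⟩

end Complements

namespace Module.Basis

section FinCons

variable {K V : Type*} [Field K] [AddCommGroup V] [Module K V] {N : Submodule K V} {y : V}
  {n : ℕ}

noncomputable def finConsOfIsCompl (h : IsCompl (K ∙ y) N) (hy : y ≠ 0)
    (b : Basis (Fin n) K N) : Basis (Fin (n + 1)) K V :=
  mkFinCons y b
    (fun a x hx hax ↦ by
      have hay : a • y ∈ (K ∙ y) ⊓ N :=
        ⟨Submodule.smul_mem _ a (Submodule.mem_span_singleton_self y),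
          by rw [eq_neg_of_add_eq_zero_left hax]; exact N.neg_mem hx⟩
      rw [h.inf_eq_bot, Submodule.mem_bot, smul_eq_zero] at hay
      exact hay.resolve_right hy)
    (fun z ↦ by
      obtain ⟨a, x, hx, rfl⟩ := h.exists_smul_add z
      exact ⟨-a, by simpa [add_comm] using hx⟩)

variable (h : IsCompl (K ∙ y) N) (hy : y ≠ 0) (b : Basis (Fin n) K N)

@[simp]
theorem finConsOfIsCompl_zero : finConsOfIsCompl h hy b 0 = y := by
  simp [finConsOfIsCompl]

@[simp]
theorem finConsOfIsCompl_succ (i : Fin n) : finConsOfIsCompl h hy b i.succ = b i := by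
  simp [finConsOfIsCompl]

@[simp]
theorem finConsOfIsCompl_repr_self :
    (finConsOfIsCompl h hy b).repr y = Finsupp.single 0 1 := by
  simpa using (finConsOfIsCompl h hy b).repr_self 0

theorem finConsOfIsCompl_repr_coe (x : N) :
    ⇑((finConsOfIsCompl h hy b).repr x) = Fin.cons 0 ⇑(b.repr x) := by
  have hx : (x : V) =
      ∑ i, (Fin.cons 0 ⇑(b.repr x) : Fin (n + 1) → K) i • finConsOfIsCompl h hy b i := by
    simp only [Fin.sum_univ_succ, Fin.cons_zero, Fin.cons_succ, finConsOfIsCompl_succ,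
      zero_smul, zero_add]
    exact_mod_cast (b.sum_repr x).symm
  rw [hx, repr_sum_self]

end FinCons

variable {K : Type*} [Field K]

theorem isUnit_toMatrix_s3 {ι V : Type*} [Fintype ι] [DecidableEq ι] [AddCommGroup V] [Module K V]
    (b b' : Basis ι K V) : IsUnit (b.toMatrix b') :=
  letI := b.invertibleToMatrix b'
  isUnit_of_invertible _

theorem toMatrix_mul_mul_inv_toMatrix {ι κ : Type*} [Fintype ι] [DecidableEq ι] [Fintype κ]
    [DecidableEq κ] (B : Matrix ι κ K) (v : Basis ι K (ι → K)) (w : Basis κ K (κ → K)) :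
    v.toMatrix (Pi.basisFun K ι) * B * (w.toMatrix (Pi.basisFun K κ))⁻¹ =
      LinearMap.toMatrix w v (toLin' B) := by
  rw [inv_eq_right_inv (w.toMatrix_mul_toMatrix_flip _),
    ← basis_toMatrix_mul_linearMap_toMatrix_mul_basis_toMatrix w (Pi.basisFun K κ) v
      (Pi.basisFun K ι), ← toLin_eq_toLin', LinearMap.toMatrix_toLin]

end Module.Basis

section RectDiagonalizable

variable {K V W : Type*} [Field K] [AddCommGroup V] [Module K V] [AddCommGroup W] [Module K W]

def RectDiagonalizable (b : W →ₗ[K] V) (c : V →ₗ[K] W) : Prop :=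
  ∃ (p q : ℕ) (v : Basis (Fin p) K V) (w : Basis (Fin q) K W),
    (LinearMap.toMatrix w v b).IsRectDiagonal ∧ (LinearMap.toMatrix v w c).IsRectDiagonal

variable {b : W →ₗ[K] V} {c : V →ₗ[K] W}

theorem RectDiagonalizable.symm (h : RectDiagonalizable b c) : RectDiagonalizable c b :=
  let ⟨p, q, v, w, hb, hc⟩ := h
  ⟨q, p, w, v, hc, hb⟩

theorem rectDiagonalizable_zero [FiniteDimensional K V] [FiniteDimensional K W] :
    RectDiagonalizable (0 : W →ₗ[K] V) 0 :=
  ⟨_, _, finBasis K V, finBasis K W, by simpa using isRectDiagonal_zero,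
    by simpa using isRectDiagonal_zero⟩

theorem isRectDiagonal_toMatrix_finConsOfIsCompl {p q : ℕ} {V₁ : Submodule K V}
    {W₁ : Submodule K W} {v₀ : V} {w₀ : W} (hV : IsCompl (K ∙ v₀) V₁) (hv₀ : v₀ ≠ 0)
    (hW : IsCompl (K ∙ w₀) W₁) (hw₀ : w₀ ≠ 0) (v : Basis (Fin p) K V₁)
    (w : Basis (Fin q) K W₁) {f : W →ₗ[K] V} (hf : MapsTo f W₁ V₁) {β : K}
    (hfw₀ : f w₀ = β • v₀) (h : (LinearMap.toMatrix w v (f.restrict hf)).IsRectDiagonal) :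
    (LinearMap.toMatrix (w.finConsOfIsCompl hW hw₀)
      (v.finConsOfIsCompl hV hv₀) f).IsRectDiagonal := by
  have hrestrict (j : Fin q) : f (w j) = f.restrict hf (w j) := rfl
  refine IsRectDiagonal.of_submatrix_succ (fun j ↦ ?_) (fun i ↦ ?_) (fun i j hij ↦ ?_)
  · simp [LinearMap.toMatrix_apply, hrestrict, Basis.finConsOfIsCompl_repr_coe]
  · simp [LinearMap.toMatrix_apply, hfw₀]
  · simpa [LinearMap.toMatrix_apply, hrestrict, Basis.finConsOfIsCompl_repr_coe] using h i j hij

theorem RectDiagonalizable.of_restrict {V₁ : Submodule K V} {W₁ : Submodule K W} {v₀ : V}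
    {w₀ : W} (hV : IsCompl (K ∙ v₀) V₁) (hv₀ : v₀ ≠ 0) (hW : IsCompl (K ∙ w₀) W₁)
    (hw₀ : w₀ ≠ 0) {β γ : K} (hbw₀ : b w₀ = β • v₀) (hcv₀ : c v₀ = γ • w₀)
    (hb : MapsTo b W₁ V₁) (hc : MapsTo c V₁ W₁)
    (h : RectDiagonalizable (b.restrict hb) (c.restrict hc)) : RectDiagonalizable b c :=
  let ⟨p, q, v, w, hbd, hcd⟩ := h
  ⟨p + 1, q + 1, v.finConsOfIsCompl hV hv₀, w.finConsOfIsCompl hW hw₀,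
    isRectDiagonal_toMatrix_finConsOfIsCompl hV hv₀ hW hw₀ v w hb hbw₀ hbd,
    isRectDiagonal_toMatrix_finConsOfIsCompl hW hw₀ hV hv₀ w v hc hcv₀ hcd⟩

end RectDiagonalizable

/-- `V` and `W` share a universe so that the induction can exchange them. -/
theorem rectDiagonalizable_of_isSemisimple {K : Type*} {V W : Type u} [Field K] [IsAlgClosed K]
    [AddCommGroup V] [Module K V] [AddCommGroup W] [Module K W] [FiniteDimensional K V]
    [FiniteDimensional K W] {b : W →ₗ[K] V} {c : V →ₗ[K] W}
    (hbc : IsSemisimple (b ∘ₗ c)) (hcb : IsSemisimple (c ∘ₗ b)) : RectDiagonalizable b c := by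
  induction hn : finrank K V + finrank K W using Nat.strong_induction_on generalizing V W with
  | _ n ih =>
  wlog hb : b ≠ 0 generalizing V W with hsymm
  · by_cases hc : c = 0
    · rw [not_not.mp hb, hc]
      exact rectDiagonalizable_zero
    · exact (hsymm hcb hbc (by omega) hc).symm
  obtain ⟨w, γ, hγ, hbw⟩ := exists_eigenvector_apply_ne_zero hcb.iSup_eigenspace_eq_top hb
  have hbw_eigen : (b ∘ₗ c) (b w) = γ • b w :=
    show b ((c ∘ₗ b) w) = _ by rw [hγ, map_smul]
  obtain ⟨V₁, hV₁, hV₁inv⟩ := hbc.exists_isCompl_span_singleton_mapsTo hbw_eigen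
  have hb₁ : MapsTo b (V₁.comap b) V₁ := fun _ hx ↦ hx
  have hc₁ : MapsTo c V₁ (V₁.comap b) := fun x hx ↦ show b (c x) ∈ V₁ from hV₁inv hx
  have hW₁inv : MapsTo (c ∘ₗ b) (V₁.comap b) (V₁.comap b) := fun _ hx ↦ hV₁inv hx
  refine .of_restrict hV₁ hbw (isCompl_span_singleton_comap hV₁ hbw)
    (ne_of_apply_ne b (by simpa using hbw)) (one_smul K (b w)).symm hγ hb₁ hc₁
    (ih _ ?_ (hbc.restrict hV₁inv) (hcb.restrict hW₁inv) rfl)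
  have hV₁lt : finrank K V₁ < finrank K V :=
    Submodule.finrank_lt fun h ↦
      (Submodule.disjoint_span_singleton' hbw).mp hV₁.disjoint.symm (h ▸ Submodule.mem_top)
  have := Submodule.finrank_le (V₁.comap b)
  omega

theorem gl_mn_semisimple_normal_form_general (m n : ℕ)
    (B : Matrix (Fin m) (Fin n) ℂ) (C : Matrix (Fin n) (Fin m) ℂ)
    (hBC : (B * C).IsDiagonalizable) (hCB : (C * B).IsDiagonalizable) :
    ∃ g : Matrix (Fin m) (Fin m) ℂ, IsUnit g ∧
    ∃ h : Matrix (Fin n) (Fin n) ℂ, IsUnit h ∧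
      (∀ (i : Fin m) (j : Fin n), (i : ℕ) ≠ (j : ℕ) → (g * B * h⁻¹) i j = 0) ∧
      (∀ (i : Fin n) (j : Fin m), (i : ℕ) ≠ (j : ℕ) → (h * C * g⁻¹) i j = 0) := by
  have hbc := hBC.isSemisimple_toLin'
  have hcb := hCB.isSemisimple_toLin'
  rw [toLin'_mul] at hbc hcb
  obtain ⟨p, q, v, w, hB, hC⟩ := rectDiagonalizable_of_isSemisimple hbc hcb
  obtain rfl : p = m := by simpa using (finrank_eq_card_basis v).symm
  obtain rfl : q = n := by simpa using (finrank_eq_card_basis w).symm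
  rw [← Basis.toMatrix_mul_mul_inv_toMatrix] at hB hC
  exact ⟨_, v.isUnit_toMatrix_s3 _, _, w.isUnit_toMatrix_s3 _, hB, hC⟩

/-- Normal form for odd elements of gl(m|n) with semisimple square: up to the adjoint
action of GL(m) × GL(n), both blocks can be made rectangular-diagonal. -/
theorem gl_mn_semisimple_normal_form (m n : ℕ) (hm : 1 ≤ m) (hn : 1 ≤ n)
    (B : Matrix (Fin m) (Fin n) ℂ) (C : Matrix (Fin n) (Fin m) ℂ)
    (hBC : (B * C).IsDiagonalizable) (hCB : (C * B).IsDiagonalizable) :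
    ∃ g : Matrix (Fin m) (Fin m) ℂ, IsUnit g ∧
    ∃ h : Matrix (Fin n) (Fin n) ℂ, IsUnit h ∧
      (∀ (i : Fin m) (j : Fin n), (i : ℕ) ≠ (j : ℕ) → (g * B * h⁻¹) i j = 0) ∧
      (∀ (i : Fin n) (j : Fin m), (i : ℕ) ≠ (j : ℕ) → (h * C * g⁻¹) i j = 0) :=
  gl_mn_semisimple_normal_form_general m n B C hBC hCB
end

section
/- Let p, q, t ≥ 0, let R ∈ M_p(ℂ) be invertible, and let U ∈ M_{p×t}(ℂ), V ∈ M_{q×t}(ℂ). If the block matrix M = [[R, 0, U],[0, 0, V],[0, 0, 0]] ∈ M_{p+q+t}(ℂ) is diagonalizable, then V = 0. (This is the step in the classification of odd elements of p(n) with semisimple square asserting that, once the skew-symmetric block C₁ has been brought to the form [[R, 0],[0, 0]] with R invertible, semisimplicity of u² forces the block C₂ of C to have the form [[S, T],[0, 0]].) -/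
/-! Put `x = (-R⁻¹ U c, 0, c)`. Then `M x = (0, V c, 0)` and `M (M x) = 0`. A diagonalizable
matrix has the same kernel as its square, so `M x = 0`, that is `V c = 0` for every `c`. -/

open Matrix

namespace Matrix

theorem diagonal_mulVec_eq_zero_of_mulVec_mulVec_eq_zero {ι α : Type*} [Fintype ι]
    [DecidableEq ι] [NonUnitalNonAssocSemiring α] [NoZeroDivisors α] {d y : ι → α}
    (h : diagonal d *ᵥ (diagonal d *ᵥ y) = 0) : diagonal d *ᵥ y = 0 := by
  funext i
  have hi : d i * (d i * y i) = 0 := by simpa [mulVec_diagonal] using congrFun h i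
  rcases mul_eq_zero.mp hi with hd | hdy
  · simp [mulVec_diagonal, hd]
  · simpa [mulVec_diagonal] using hdy

theorem IsDiagonalizable.mulVec_eq_zero_of_mulVec_mulVec_eq_zero {ι : Type*} [Fintype ι]
    [DecidableEq ι] {M : Matrix ι ι ℂ} (hM : M.IsDiagonalizable) {x : ι → ℂ}
    (hx : M *ᵥ (M *ᵥ x) = 0) : M *ᵥ x = 0 := by
  obtain ⟨g, hg, d, hgd⟩ := hM
  have hgM : g * M = diagonal d * g := by
    rw [← hgd, Matrix.mul_assoc _ g⁻¹, nonsing_inv_mul _ ((isUnit_iff_isUnit_det g).mp hg),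
      Matrix.mul_one]
  have intertwine (y : ι → ℂ) : g *ᵥ (M *ᵥ y) = diagonal d *ᵥ (g *ᵥ y) := by
    rw [mulVec_mulVec, mulVec_mulVec, hgM]
  apply mulVec_injective_of_isUnit hg
  rw [mulVec_zero, intertwine]
  apply diagonal_mulVec_eq_zero_of_mulVec_mulVec_eq_zero
  rw [← intertwine, ← intertwine, hx, mulVec_zero]

variable {l m n α : Type*} [Fintype l] [Fintype m] [Fintype n]

theorem fromBlocks_fromCols_mulVec_sumElim_zero_sumElim_zero [Semiring α]
    (R : Matrix l l α) (U : Matrix l n α) (V : Matrix m n α) (w : m → α) :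
    fromBlocks R (fromCols 0 U) 0 (fromBlocks 0 V 0 0 : Matrix (m ⊕ n) (m ⊕ n) α) *ᵥ
      Sum.elim (0 : l → α) (Sum.elim w (0 : n → α)) = 0 := by
  ext (k | k | k) <;> simp [fromBlocks_mulVec]

theorem fromBlocks_fromCols_mulVec_sumElim_of_isUnit [DecidableEq l] [CommRing α]
    {R : Matrix l l α} (hR : IsUnit R) (U : Matrix l n α) (V : Matrix m n α) (c : n → α) :
    fromBlocks R (fromCols 0 U) 0 (fromBlocks 0 V 0 0 : Matrix (m ⊕ n) (m ⊕ n) α) *ᵥ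
        Sum.elim (-((R⁻¹ * U) *ᵥ c)) (Sum.elim (0 : m → α) c) =
        Sum.elim (0 : l → α) (Sum.elim (V *ᵥ c) (0 : n → α)) := by
  have hRR : R * R⁻¹ = 1 := mul_nonsing_inv R ((isUnit_iff_isUnit_det R).mp hR)
  ext (k | k | k) <;>
    simp [fromBlocks_mulVec, mulVec_neg, mulVec_mulVec, ← Matrix.mul_assoc, hRR]

end Matrix

/-- If `R` is invertible and the block matrix `[[R, 0, U],[0, 0, V],[0, 0, 0]]`
(with diagonal blocks of sizes `p`, `q`, `t`) is diagonalizable, then `V = 0`. -/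
theorem diagonalizable_forces_block_zero (p q t : ℕ)
    (R : Matrix (Fin p) (Fin p) ℂ) (hR : IsUnit R)
    (U : Matrix (Fin p) (Fin t) ℂ) (V : Matrix (Fin q) (Fin t) ℂ)
    (hM : (Matrix.fromBlocks R (Matrix.fromCols 0 U) 0
            (Matrix.fromBlocks 0 V 0 0)).IsDiagonalizable) :
    V = 0 := by
  refine ext_iff_mulVec.mpr fun c ↦ ?_
  have hMx := fromBlocks_fromCols_mulVec_sumElim_of_isUnit hR U V c
  have hMMx := fromBlocks_fromCols_mulVec_sumElim_zero_sumElim_zero R U V (V *ᵥ c)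
  rw [← hMx] at hMMx
  have hzero := hM.mulVec_eq_zero_of_mulVec_mulVec_eq_zero hMMx
  rw [hMx] at hzero
  simpa [← Sum.elim_zero_zero, Sum.elim_eq_iff] using hzero
end
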